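/- arXiv:1502.02856 — 2 statements merged into one kernel-verified Lean document; each statement's English description precedes it below -/
import Mathlib

section
/- Assume μ_H > μ_L and λ < s μ_L, and for each j ∈ {0,…,s} let x_j denote the smallest nonnegative real root of q_j (for j = s the polynomial q_s is affine and x_s = λ/(λ + s μ_H)). Then the sequence (x_j) is strictly decreasing in j: x_{j+1} < x_j for all 0 ≤ j ≤ s−1. In particular every x_j with j ≥ 1 lies strictly below x_0 = λ/(s μ_L). -/
/-!
Passing from `q_j` to `q_{j+1}` subtracts `(μ_H - μ_L) x + μ_L x²`, which is positive for `x > 0`.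
So `q_{j+1}` is negative at `x_j > 0` while `q_{j+1}(0) = λ > 0`, and the intermediate value
theorem puts a root of `q_{j+1}` strictly inside `(0, x_j)`. The endpoints are explicit:
`q_0(x) = (1 - x)(λ - sμ_L x)` with `λ / (sμ_L) < 1`, and `q_s` is affine.
-/

noncomputable def qpoly (s j : ℕ) (lam muH muL : ℝ) (x : ℝ) : ℝ :=
  lam - (lam + ((s : ℝ) - (j : ℝ)) * muL + (j : ℝ) * muH) * x + ((s : ℝ) - (j : ℝ)) * muL * x ^ 2

section LeastRoot

variable {f : ℝ → ℝ} {r : ℝ}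

theorem pos_of_isLeast_nonneg_roots (hr : IsLeast {y | 0 ≤ y ∧ f y = 0} r) (h0 : f 0 ≠ 0) :
    0 < r :=
  hr.1.1.lt_of_ne fun h => h0 (h ▸ hr.1.2)

theorem lt_of_isLeast_nonneg_roots (hf : Continuous f) (hr : IsLeast {y | 0 ≤ y ∧ f y = 0} r)
    (h0 : 0 < f 0) {a : ℝ} (ha : 0 ≤ a) (hfa : f a < 0) : r < a := by
  obtain ⟨y, hy, hfy⟩ := intermediate_value_Ioo' ha hf.continuousOn ⟨hfa, h0⟩
  exact (hr.2 ⟨hy.1.le, hfy⟩).trans_lt hy.2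

end LeastRoot

namespace qpoly

variable {s j : ℕ} {lam muH muL : ℝ}

@[simp]
theorem apply_zero : qpoly s j lam muH muL 0 = lam := by
  simp [qpoly]

theorem continuous : Continuous (qpoly s j lam muH muL) := by
  unfold qpoly
  fun_prop

theorem succ_apply (x : ℝ) :
    qpoly s (j + 1) lam muH muL x =
      qpoly s j lam muH muL x - (muH - muL) * x - muL * x ^ 2 := by
  simp only [qpoly]
  push_cast
  ring

theorem zero_apply (x : ℝ) : qpoly s 0 lam muH muL x = (1 - x) * (lam - s * muL * x) := by
  simp only [qpoly]
  push_cast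
  ring

theorem self_apply (x : ℝ) : qpoly s s lam muH muL x = lam - (lam + s * muH) * x := by
  simp only [qpoly]
  ring

theorem succ_lt_of_isLeast (hlam : 0 < lam) (hmuL : 0 ≤ muL) (hHL : muL < muH) {a b : ℝ}
    (ha : IsLeast {y | 0 ≤ y ∧ qpoly s j lam muH muL y = 0} a)
    (hb : IsLeast {y | 0 ≤ y ∧ qpoly s (j + 1) lam muH muL y = 0} b) : b < a := by
  have ha_pos : 0 < a := pos_of_isLeast_nonneg_roots ha (apply_zero.trans_ne hlam.ne')
  refine lt_of_isLeast_nonneg_roots continuous hb (apply_zero.symm ▸ hlam) ha_pos.le ?_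
  rw [succ_apply, ha.1.2]
  nlinarith

theorem eq_of_isLeast_zero (hlam : 0 < lam) (hstab : lam < s * muL) {a : ℝ}
    (ha : IsLeast {y | 0 ≤ y ∧ qpoly s 0 lam muH muL y = 0} a) : a = lam / (s * muL) := by
  have hsmuL : 0 < (s : ℝ) * muL := hlam.trans hstab
  have hquot_lt_one : lam / (s * muL) < 1 := (div_lt_one hsmuL).mpr hstab
  have hle : a ≤ lam / (s * muL) :=
    ha.2 ⟨by positivity, by rw [zero_apply, mul_div_cancel₀ _ hsmuL.ne', sub_self, mul_zero]⟩
  have hroot := ha.1.2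
  rw [zero_apply, mul_eq_zero] at hroot
  rcases hroot with h | h
  · linarith
  · rw [eq_div_iff hsmuL.ne']
    linarith

theorem eq_of_self_eq_zero (hlam : 0 < lam) (hmuH : 0 ≤ muH) {a : ℝ}
    (ha : qpoly s s lam muH muL a = 0) : a = lam / (lam + s * muH) := by
  rw [self_apply] at ha
  rw [eq_div_iff (by positivity)]
  linarith

end qpoly

theorem statement3_general (s : ℕ) (lam muH muL : ℝ)
    (hlam : 0 < lam) (hmuH : 0 < muH) (hmuL : 0 < muL)
    (hHL : muL < muH) (hstab : lam < (s : ℝ) * muL)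
    (x : ℕ → ℝ)
    (hx : ∀ j ≤ s, IsLeast {y : ℝ | 0 ≤ y ∧ qpoly s j lam muH muL y = 0} (x j)) :
    (∀ j, j + 1 ≤ s → x (j + 1) < x j) ∧
    x 0 = lam / ((s : ℝ) * muL) ∧
    x s = lam / (lam + (s : ℝ) * muH) ∧
    (∀ j, 1 ≤ j → j ≤ s → x j < lam / ((s : ℝ) * muL)) := by
  have hdec : ∀ j, j + 1 ≤ s → x (j + 1) < x j := fun j hj =>
    qpoly.succ_lt_of_isLeast hlam hmuL.le hHL (hx j (by omega)) (hx (j + 1) hj)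
  have hx0 : x 0 = lam / (s * muL) := qpoly.eq_of_isLeast_zero hlam hstab (hx 0 s.zero_le)
  have hanti : StrictAntiOn x (Set.Iic s) := strictAntiOn_Iic_of_succ_lt fun m hm => hdec m hm
  refine ⟨hdec, hx0, qpoly.eq_of_self_eq_zero hlam hmuH.le (hx s le_rfl).1.2, fun j hj1 hjs => ?_⟩
  rw [← hx0]
  exact hanti (Set.mem_Iic.2 s.zero_le) (Set.mem_Iic.2 hjs) (by omega)

/-- assume μ_H > μ_L and λ < sμ_L, and let x_j be the smallest nonnegative real
root of q_j for 0 ≤ j ≤ s (for j = s, q_s is affine with x_s = λ/(λ + sμ_H)).  Then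
x_{j+1} < x_j for all 0 ≤ j ≤ s−1; in particular x_0 = λ/(sμ_L) and every x_j with j ≥ 1 lies
strictly below x_0. -/
theorem statement3 (s : ℕ) (hs : 1 ≤ s) (lam muH muL : ℝ)
    (hlam : 0 < lam) (hmuH : 0 < muH) (hmuL : 0 < muL)
    (hHL : muL < muH) (hstab : lam < (s : ℝ) * muL)
    (x : ℕ → ℝ)
    (hx : ∀ j ≤ s, IsLeast {y : ℝ | 0 ≤ y ∧ qpoly s j lam muH muL y = 0} (x j)) :
    (∀ j, j + 1 ≤ s → x (j + 1) < x j) ∧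
    x 0 = lam / ((s : ℝ) * muL) ∧
    x s = lam / (lam + (s : ℝ) * muH) ∧
    (∀ j, 1 ≤ j → j ≤ s → x j < lam / ((s : ℝ) * muL)) :=
  statement3_general s lam muH muL hlam hmuH hmuL hHL hstab x hx
end

section
/- Let R be an n×n real lower triangular matrix all of whose diagonal entries have absolute value strictly less than 1. Then I − R is invertible, the series ∑_{k=0}^∞ R^k converges (entrywise), and ∑_{k=0}^∞ R^k = (I − R)^{-1}. -/
/-!
Conjugating `R` by `diagonal (ε ^ i)` produces the matrix with entries `ε ^ (i - j) * R i j`,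
which tends to the diagonal part of `R` as `ε → 0`. Hence for some `ε ≠ 0` its max-row-sum norm
is `< 1`, so its geometric series converges, and conjugating back so does `∑ R ^ k`. A convergent
geometric series `∑ x ^ k` in a topological ring always sums to the two-sided inverse of `1 - x`.
-/

open Topology Matrix OrderDual

section GeometricSeries

variable {α : Type*} [Ring α] [TopologicalSpace α] [IsTopologicalRing α]

theorem Summable.isUnit_one_sub [T2Space α] {x : α} (h : Summable (x ^ ·)) : IsUnit (1 - x) :=
  ⟨⟨1 - x, ∑' i, x ^ i, h.one_sub_mul_tsum_pow, h.tsum_pow_mul_one_sub⟩, rfl⟩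

theorem Summable.hasSum_pow_ringInverse_one_sub [T2Space α] {x : α} (h : Summable (x ^ ·)) :
    HasSum (x ^ ·) (Ring.inverse (1 - x)) := by
  convert h.hasSum
  exact Ring.inverse_unit ⟨1 - x, ∑' i, x ^ i, h.one_sub_mul_tsum_pow, h.tsum_pow_mul_one_sub⟩

theorem Units.summable_pow_conj_iff (u : αˣ) (x : α) :
    Summable (fun k : ℕ => (↑u * x * ↑u⁻¹ : α) ^ k) ↔ Summable (x ^ ·) := by
  simp_rw [Units.conj_pow]
  refine ⟨fun h => ((h.mul_left (↑u⁻¹ : α)).mul_right (u : α)).congr fun k => ?_,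
    fun h => (h.mul_left (u : α)).mul_right (↑u⁻¹ : α)⟩
  simp [mul_assoc]

end GeometricSeries

namespace Matrix

variable {n : ℕ}

-- `(i : ℕ) - j` truncates to `0` above the diagonal, where `R i j = 0` anyway.
theorem diagonal_pow_mul_mul_diagonal_inv_pow {K : Type*} [Field K]
    {R : Matrix (Fin n) (Fin n) K} (hR : R.BlockTriangular toDual) {ε : K} (hε : ε ≠ 0) :
    diagonal (fun i : Fin n => ε ^ (i : ℕ)) * R * diagonal (fun i : Fin n => (ε ^ (i : ℕ))⁻¹) =
      of fun (i j : Fin n) => ε ^ ((i : ℕ) - j) * R i j := by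
  ext i j
  simp only [diagonal_mul, mul_diagonal, of_apply]
  rcases le_or_gt j i with hji | hij
  · rw [pow_sub₀ ε hε hji]
    ring
  · rw [hR (toDual_lt_toDual.mpr hij)]
    simp

theorem of_zero_pow_sub_mul_eq_diagonal {K : Type*} [MonoidWithZero K]
    {R : Matrix (Fin n) (Fin n) K} (hR : R.BlockTriangular toDual) :
    (of fun (i j : Fin n) => (0 : K) ^ ((i : ℕ) - j) * R i j) = diagonal fun i => R i i := by
  ext i j
  rcases lt_trichotomy i j with hij | rfl | hji
  · simp [hR (toDual_lt_toDual.mpr hij), hij.ne]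
  · simp
  · simp [hji.ne', zero_pow (Nat.sub_ne_zero_of_lt hji)]

-- The normed-algebra instance is what makes the matrices complete (finite dimension over `𝕜`).
attribute [local instance] Matrix.linftyOpNormedRing Matrix.linftyOpNormedAlgebra

theorem exists_ne_zero_norm_of_pow_sub_mul_lt_one {𝕜 : Type*} [NontriviallyNormedField 𝕜]
    {R : Matrix (Fin n) (Fin n) 𝕜} (hR : R.BlockTriangular toDual) (hdiag : ∀ i, ‖R i i‖ < 1) :
    ∃ ε : 𝕜, ε ≠ 0 ∧ ‖of fun (i j : Fin n) => ε ^ ((i : ℕ) - j) * R i j‖ < 1 := by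
  have hcont : Continuous fun ε : 𝕜 => of fun (i j : Fin n) => ε ^ ((i : ℕ) - j) * R i j :=
    continuous_pi fun i => continuous_pi fun j => by fun_prop
  have hzero : ‖of fun (i j : Fin n) => (0 : 𝕜) ^ ((i : ℕ) - j) * R i j‖ < 1 := by
    rw [of_zero_pow_sub_mul_eq_diagonal hR, linfty_opNorm_diagonal, pi_norm_lt_iff one_pos]
    exact hdiag
  have hnear := (hcont.norm.tendsto 0).eventually (gt_mem_nhds hzero)
  obtain ⟨ε, hε, hne⟩ := ((hnear.filter_mono nhdsWithin_le_nhds).and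
    (self_mem_nhdsWithin : {(0 : 𝕜)}ᶜ ∈ 𝓝[≠] 0)).exists
  exact ⟨ε, hne, hε⟩

theorem isUnit_one_sub_and_hasSum_pow_of_lowerTriangular {𝕜 : Type*} [RCLike 𝕜]
    {R : Matrix (Fin n) (Fin n) 𝕜} (hR : R.BlockTriangular toDual) (hdiag : ∀ i, ‖R i i‖ < 1) :
    IsUnit (1 - R) ∧ HasSum (fun k => R ^ k) (1 - R)⁻¹ := by
  obtain ⟨ε, hε, hnorm⟩ := exists_ne_zero_norm_of_pow_sub_mul_lt_one hR hdiag
  let D : (Matrix (Fin n) (Fin n) 𝕜)ˣ :=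
    ⟨diagonal fun i : Fin n => ε ^ (i : ℕ), diagonal fun i : Fin n => (ε ^ (i : ℕ))⁻¹,
      by simp [hε], by simp [hε]⟩
  have hconj : Summable fun k : ℕ => (D.val * R * D⁻¹.val) ^ k := by
    rw [show D.val * R * D⁻¹.val = _ from diagonal_pow_mul_mul_diagonal_inv_pow hR hε]
    exact summable_geometric_of_norm_lt_one hnorm
  have hsum := (D.summable_pow_conj_iff R).mp hconj
  rw [nonsing_inv_eq_ringInverse]
  exact ⟨hsum.isUnit_one_sub, hsum.hasSum_pow_ringInverse_one_sub⟩

end Matrix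

/-- if R is an n×n real lower triangular matrix with all diagonal entries of
absolute value < 1, then I − R is invertible, the series ∑ R^k converges, and its sum is
(I − R)⁻¹. -/
theorem statement6 (n : ℕ) (R : Matrix (Fin n) (Fin n) ℝ)
    (hlow : ∀ i j : Fin n, i < j → R i j = 0)
    (hdiag : ∀ i : Fin n, |R i i| < 1) :
    IsUnit (1 - R) ∧ HasSum (fun k : ℕ => R ^ k) (1 - R)⁻¹ :=
  Matrix.isUnit_one_sub_and_hasSum_pow_of_lowerTriangular (fun _ _ => hlow _ _) hdiag
end
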